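/- Let N ≥ 2 and let (u,v) be a classical solution on ℝ^N of the Lotka–Volterra competition–diffusion system, taking values in [0,1]×[0,1], whose initial datum (u(0,·), v(0,·)) = (u₀,v₀) is admissible. Then for every e ∈ 𝕊^{N−1} and every c > 2√(r₁)·max(√(d₁), √(d₂/2)), sup{ u(t,x) + |1 − v(t,x)| : x ∈ ℝ^N, x·e ≥ ct } → 0 as t → +∞; in particular the same convergence holds for the supremum over { x : |x| ≥ ct }. -/

import Mathlib

open Set Metric Filter Topology ENNReal

noncomputable section

/-- Euclidean space `ℝ^N`. -/
abbrev Euc (N : ℕ) := EuclideanSpace ℝ (Fin N)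

variable {N : ℕ}

/-- `Ω` is strongly unbounded in the direction `e`. -/
def StronglyUnbounded (Ω : Set (Euc N)) (e : Euc N) : Prop :=
  ∃ R : ℝ, 0 ≤ R ∧ ∃ s₀ : ℝ, ∀ s : ℝ, s₀ ≤ s →
    (closedBall (s • e) R ∩ closure Ω).Nonempty

/-- `R(e)`: the infimum of the admissible radii in the direction `e`. -/
def dirRadius (Ω : Set (Euc N)) (e : Euc N) : ℝ :=
  sInf {R : ℝ | 0 ≤ R ∧ ∃ s₀ : ℝ, ∀ s : ℝ, s₀ ≤ s →
    (closedBall (s • e) R ∩ closure Ω).Nonempty}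

/-- `R(e,z)`, as an extended nonnegative real. -/
def dirRadiusAt (Ω : Set (Euc N)) (e z : Euc N) : ℝ≥0∞ :=
  sInf {r : ℝ≥0∞ | ∃ R : ℝ, 0 ≤ R ∧ r = ENNReal.ofReal R ∧ ∃ s₀ : ℝ, ∀ s : ℝ, s₀ ≤ s →
    (closedBall (z + s • e) R ∩ closure Ω).Nonempty}

/-- The set of speeds `c > 0` entering the definition of the upper spreading speed `w*(e)`. -/
def upperSpeedSet (Ω : Set (Euc N)) (e : Euc N) (u v : ℝ → Euc N → ℝ) : Set ℝ :=
  {c : ℝ | 0 < c ∧ ∀ A : ℝ, dirRadius Ω e < A → ∀ ε > (0:ℝ), ∃ T : ℝ, ∀ t : ℝ, T ≤ t →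
    ∀ s : ℝ, c * t ≤ s → ∀ x ∈ closedBall (s • e) A ∩ closure Ω,
      |u t x| + |1 - v t x| ≤ ε}

/-- The upper spreading speed `w*(e)` in the direction `e`, in `[0,+∞]`. -/
def wUpper (Ω : Set (Euc N)) (e : Euc N) (u v : ℝ → Euc N → ℝ) : ℝ≥0∞ :=
  sInf (ENNReal.ofReal '' upperSpeedSet Ω e u v)

/-- The set of speeds `c > 0` entering the definition of `w*(e,z)`. -/
def upperSpeedSetAt (Ω : Set (Euc N)) (e z : Euc N) (u v : ℝ → Euc N → ℝ) : Set ℝ :=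
  {c : ℝ | 0 < c ∧ ∃ A : ℝ, 0 < A ∧
    (∃ s₀ : ℝ, ∀ s : ℝ, s₀ ≤ s → (closedBall (z + s • e) A ∩ closure Ω).Nonempty) ∧
    ∀ ε > (0:ℝ), ∃ T : ℝ, ∀ t : ℝ, T ≤ t → ∀ s : ℝ, c * t ≤ s →
      ∀ x ∈ closedBall (z + s • e) A ∩ closure Ω, |u t x| + |1 - v t x| ≤ ε}

/-- The upper spreading speed `w*(e,z)` along the half-line `z + ℝ₊ e`, in `[0,+∞]`. -/
def wUpperAt (Ω : Set (Euc N)) (e z : Euc N) (u v : ℝ → Euc N → ℝ) : ℝ≥0∞ :=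
  sInf (ENNReal.ofReal '' upperSpeedSetAt Ω e z u v)

/-- The set of speeds `c > 0` entering the definition of the lower spreading speed `w_*(e)`. -/
def lowerSpeedSet (Ω : Set (Euc N)) (e : Euc N) (u v : ℝ → Euc N → ℝ) : Set ℝ :=
  {c : ℝ | 0 < c ∧ ∀ A : ℝ, dirRadius Ω e < A → ∀ ε > (0:ℝ), ∃ T : ℝ, ∀ τ t : ℝ,
    T ≤ τ → T ≤ t → τ ≤ c * t → ∀ s : ℝ, τ ≤ s → s ≤ c * t →
    ∀ x ∈ closedBall (s • e) A ∩ closure Ω, |1 - u t x| + |v t x| ≤ ε}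

/-- The lower spreading speed `w_*(e)` in the direction `e`, in `[0,+∞]` (`0` if no admissible speed). -/
def wLower (Ω : Set (Euc N)) (e : Euc N) (u v : ℝ → Euc N → ℝ) : ℝ≥0∞ :=
  sSup (ENNReal.ofReal '' lowerSpeedSet Ω e u v)

/-- The set of speeds `c > 0` entering the definition of `w_*(e,z)`. -/
def lowerSpeedSetAt (Ω : Set (Euc N)) (e z : Euc N) (u v : ℝ → Euc N → ℝ) : Set ℝ :=
  {c : ℝ | 0 < c ∧ ∃ A : ℝ, 0 < A ∧
    (∃ s₀ : ℝ, ∀ s : ℝ, s₀ ≤ s → (closedBall (z + s • e) A ∩ closure Ω).Nonempty) ∧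
    ∀ ε > (0:ℝ), ∃ T : ℝ, ∀ τ t : ℝ, T ≤ τ → T ≤ t → τ ≤ c * t →
      ∀ s : ℝ, τ ≤ s → s ≤ c * t →
      ∀ x ∈ closedBall (z + s • e) A ∩ closure Ω, |1 - u t x| + |v t x| ≤ ε}

/-- The lower spreading speed `w_*(e,z)` along the half-line `z + ℝ₊ e`, in `[0,+∞]`. -/
def wLowerAt (Ω : Set (Euc N)) (e z : Euc N) (u v : ℝ → Euc N → ℝ) : ℝ≥0∞ :=
  sSup (ENNReal.ofReal '' lowerSpeedSetAt Ω e z u v)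

/-- The Laplacian of a function on `ℝ^N`, as the sum of the second derivatives in the
coordinate directions. -/
def lap (f : Euc N → ℝ) (x : Euc N) : ℝ :=
  ∑ i : Fin N, fderiv ℝ (fun y => fderiv ℝ f y (EuclideanSpace.single i 1)) x
    (EuclideanSpace.single i 1)

/-- Monostability assumptions on the parameters of the Lotka-Volterra system. -/
def LVParams (d₁ d₂ r₁ r₂ a₁ a₂ : ℝ) : Prop :=
  0 < d₁ ∧ 0 < d₂ ∧ 0 < r₁ ∧ 0 < r₂ ∧ 0 < a₁ ∧ a₁ < 1 ∧ 1 < a₂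

/-- A classical solution of the Lotka-Volterra competition-diffusion system on the whole
space `ℝ^N`: bounded and continuous on `[0,∞) × ℝ^N`, `C¹` in `t` and `C²` in `x` on
`(0,∞) × ℝ^N`, satisfying the system pointwise. -/
structure IsLVSolution (d₁ d₂ r₁ r₂ a₁ a₂ : ℝ) (u v : ℝ → Euc N → ℝ) : Prop where
  contu : ContinuousOn (fun p : ℝ × Euc N => u p.1 p.2) (Ici 0 ×ˢ univ)
  contv : ContinuousOn (fun p : ℝ × Euc N => v p.1 p.2) (Ici 0 ×ˢ univ)
  bounded : ∃ M : ℝ, ∀ t : ℝ, 0 ≤ t → ∀ x : Euc N, |u t x| ≤ M ∧ |v t x| ≤ M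
  smooth_t : ∀ x : Euc N, ContDiffOn ℝ 1 (fun t => u t x) (Ioi 0) ∧
    ContDiffOn ℝ 1 (fun t => v t x) (Ioi 0)
  smooth_x : ∀ t : ℝ, 0 < t → ContDiff ℝ 2 (u t) ∧ ContDiff ℝ 2 (v t)
  eqn_u : ∀ t : ℝ, 0 < t → ∀ x : Euc N, deriv (fun τ => u τ x) t =
    d₁ * lap (u t) x + r₁ * u t x * (1 - u t x - a₁ * v t x)
  eqn_v : ∀ t : ℝ, 0 < t → ∀ x : Euc N, deriv (fun τ => v τ x) t =
    d₂ * lap (v t) x + r₂ * v t x * (1 - v t x - a₂ * u t x)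

/-- An admissible initial datum: continuous with values in `[0,1]`, `u₀ ≢ 0`, and
`(u₀,v₀) = (0,1)` outside a compact set. -/
def AdmissibleInit (u₀ v₀ : Euc N → ℝ) : Prop :=
  Continuous u₀ ∧ Continuous v₀ ∧ (∀ x, u₀ x ∈ Icc (0:ℝ) 1 ∧ v₀ x ∈ Icc (0:ℝ) 1) ∧
  (∃ x, u₀ x ≠ 0) ∧ ∃ K : Set (Euc N), IsCompact K ∧ ∀ x ∉ K, u₀ x = 0 ∧ v₀ x = 1

/-- A classical solution of the Lotka-Volterra competition-diffusion system on a domain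
`Ω ⊆ ℝ^N` (no boundary condition): continuous on `[0,∞) × Ω̄`, `C¹` in `t` and `C²` in `x`
on `(0,∞) × Ω`, satisfying the system pointwise on `(0,∞) × Ω`. -/
structure IsLVSolutionOn (d₁ d₂ r₁ r₂ a₁ a₂ : ℝ) (Ω : Set (Euc N))
    (u v : ℝ → Euc N → ℝ) : Prop where
  contu : ContinuousOn (fun p : ℝ × Euc N => u p.1 p.2) (Ici 0 ×ˢ closure Ω)
  contv : ContinuousOn (fun p : ℝ × Euc N => v p.1 p.2) (Ici 0 ×ˢ closure Ω)
  smooth_t : ∀ x ∈ Ω, ContDiffOn ℝ 1 (fun t => u t x) (Ioi 0) ∧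
    ContDiffOn ℝ 1 (fun t => v t x) (Ioi 0)
  smooth_x : ∀ t : ℝ, 0 < t → ContDiffOn ℝ 2 (u t) Ω ∧ ContDiffOn ℝ 2 (v t) Ω
  eqn_u : ∀ t : ℝ, 0 < t → ∀ x ∈ Ω, deriv (fun τ => u τ x) t =
    d₁ * lap (u t) x + r₁ * u t x * (1 - u t x - a₁ * v t x)
  eqn_v : ∀ t : ℝ, 0 < t → ∀ x ∈ Ω, deriv (fun τ => v τ x) t =
    d₂ * lap (v t) x + r₂ * v t x * (1 - v t x - a₂ * u t x)

/-- `Ω` has the interior ball property with radius `ε₀`. -/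
def InteriorBallProperty (Ω : Set (Euc N)) (ε₀ : ℝ) : Prop :=
  ∀ x ∈ frontier Ω, ∃ y : Euc N, ball y ε₀ ⊆ Ω ∧ dist x y = ε₀

/-- The geodesic distance in `Ω̄`: the infimum of the lengths (total variations) of
continuous paths joining `x` to `y` within `Ω̄`, `+∞` if there is no rectifiable path. -/
def geoDist (Ω : Set (Euc N)) (x y : Euc N) : ℝ≥0∞ :=
  sInf {L : ℝ≥0∞ | ∃ γ : ℝ → Euc N, ContinuousOn γ (Icc 0 1) ∧ γ 0 = x ∧ γ 1 = y ∧
    MapsTo γ (Icc 0 1) (closure Ω) ∧ L = eVariationOn γ (Icc 0 1)}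

/-- Hypothesis `H_{y,z}`: the points `y` and `z` are asymptotically connected in the
direction `e` within `Ω`. -/
def HypAsympConnected (Ω : Set (Euc N)) (e y z : Euc N) : Prop :=
  ∃ Ry Rz : ℝ, dirRadiusAt Ω e y < ENNReal.ofReal Ry ∧ dirRadiusAt Ω e z < ENNReal.ofReal Rz ∧
    ∃ C : ℝ≥0∞, C ≠ ⊤ ∧ ∃ s₀ : ℝ, ∀ s : ℝ, s₀ ≤ s →
      ∀ y' ∈ closedBall (y + s • e) Ry ∩ closure Ω,
      ∀ z' ∈ closedBall (z + s • e) Rz ∩ closure Ω, geoDist Ω y' z' ≤ C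


/-!
Let the initial datum be `(0, 1)` outside the ball of radius `R`. Both components are dominated by
exponential fronts moving in the direction `e` at the speed `c₁ = 2√(d₁r₁) < c`. Since
`∂ₜu ≤ d₁Δu + r₁u`, the front `exp(-α(x·e - c₁t - R))` with `d₁α² + r₁ ≤ αc₁` stays above `u`.
Then `∂ₜ(1 - v) ≤ d₂Δ(1 - v) + r₂a₂u`, and for a small rate `β ≤ α` and a large amplitude `B`
the front `B exp(-β(x·e - c₁t - R))` stays above `1 - v`. Both comparisons are the weak maximum
principle on `ℝ^N` for subsolutions that are bounded above. On `{x·e ≥ ct}` both fronts are at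
most `exp(-(c - c₁)t·min(α, β))` up to constants, uniformly in `e`, which also gives the estimate
on `{|x| ≥ ct}`.
-/

section Extrema

variable {E : Type*} [NormedAddCommGroup E] [NormedSpace ℝ E]

theorem IsLocalMax.deriv_deriv_nonpos {q : ℝ → ℝ} {a : ℝ} (h : IsLocalMax q a)
    (hc : ContinuousAt q a) : deriv (deriv q) a ≤ 0 := by
  by_contra! hpos
  have hconst : q =ᶠ[𝓝 a] fun _ => q a := by
    filter_upwards [h, isLocalMin_of_deriv_deriv_pos hpos h.deriv_eq_zero hc] with s h₁ h₂
    exact le_antisymm h₁ h₂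
  have : deriv (deriv q) a = 0 := by
    rw [hconst.deriv.deriv_eq]
    simp
  linarith

theorem ContDiff.differentiable_fderiv_apply {f : E → ℝ} (hf : ContDiff ℝ 2 f) (w : E) :
    Differentiable ℝ (fun y => fderiv ℝ f y w) :=
  ((ContinuousLinearMap.apply ℝ ℝ w).contDiff.comp
    (hf.fderiv_right (m := 1) (by norm_num))).differentiable (by norm_num)

theorem hasDerivAt_comp_lineMap {f : E → ℝ} (hf : Differentiable ℝ f) (x w : E) (s : ℝ) :
    HasDerivAt (fun s : ℝ => f (x + s • w)) (fderiv ℝ f (x + s • w) w) s := by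
  have hline : HasDerivAt (fun s : ℝ => x + s • w) w s := by
    simpa using ((hasDerivAt_id s).smul_const w).const_add x
  exact (hf (x + s • w)).hasFDerivAt.comp_hasDerivAt s hline

theorem IsLocalMax.fderiv_fderiv_apply_nonpos {f : E → ℝ} (hf : ContDiff ℝ 2 f) {x : E}
    (h : IsLocalMax f x) (w : E) : fderiv ℝ (fun y => fderiv ℝ f y w) x w ≤ 0 := by
  have hfd : Differentiable ℝ f := hf.differentiable (by norm_num)
  have hline : Continuous fun s : ℝ => x + s • w := by fun_prop
  have hmax : IsLocalMax (fun s : ℝ => f (x + s • w)) 0 :=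
    IsLocalMax.comp_continuous (g := fun s : ℝ => x + s • w) (by simpa using h) hline.continuousAt
  have hderiv : deriv (fun s : ℝ => f (x + s • w)) = fun s => fderiv ℝ f (x + s • w) w :=
    funext fun s => (hasDerivAt_comp_lineMap hfd x w s).deriv
  have := hmax.deriv_deriv_nonpos (hfd.continuous.comp hline).continuousAt
  rwa [hderiv, (hasDerivAt_comp_lineMap (hf.differentiable_fderiv_apply w) x w 0).deriv,
    zero_smul, add_zero] at this

end Extrema

theorem IsMaxOn.deriv_nonneg_of_right {φ : ℝ → ℝ} {a b : ℝ} (hab : a < b)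
    (h : IsMaxOn φ (Icc a b) b) (hd : DifferentiableAt ℝ φ b) : 0 ≤ deriv φ b := by
  have hcone : a - b ∈ posTangentConeAt (Icc a b) b :=
    mem_posTangentConeAt_of_segment_subset (by
      simpa using (convex_Icc a b).segment_subset (right_mem_Icc.2 hab.le) (left_mem_Icc.2 hab.le))
  have := h.localize.hasFDerivWithinAt_nonpos hd.hasDerivAt.hasFDerivAt.hasFDerivWithinAt hcone
  simp only [ContinuousLinearMap.toSpanSingleton_apply, smul_eq_mul] at this
  nlinarith

theorem exists_isMaxOn_Icc_prod {E : Type*} [NormedAddCommGroup E] [ProperSpace E]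
    {z : ℝ × E → ℝ} {a b ρ : ℝ} (hz : ContinuousOn z (Icc a b ×ˢ univ)) {p₁ : ℝ × E}
    (hp₁ : p₁ ∈ Icc a b ×ˢ univ) (hout : ∀ p ∈ Icc a b ×ˢ univ, ρ < ‖p.2‖ → z p ≤ z p₁) :
    ∃ p₀ ∈ Icc a b ×ˢ univ, IsMaxOn z (Icc a b ×ˢ univ) p₀ := by
  refine hz.exists_isMaxOn' (isClosed_Icc.prod isClosed_univ) hp₁ ?_
  rw [eventually_inf_principal]
  filter_upwards [(isCompact_Icc.prod (isCompact_closedBall (0 : E) ρ)).compl_mem_cocompact]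
    with p hp hps
  refine hout p hps (not_le.mp fun hρ => hp ⟨hps.1, ?_⟩)
  simpa using hρ

section Laplacian

variable {N : ℕ}

theorem IsLocalMax.lap_nonpos {f : Euc N → ℝ} (hf : ContDiff ℝ 2 f) {x : Euc N}
    (h : IsLocalMax f x) : lap f x ≤ 0 :=
  Finset.sum_nonpos fun _ _ => h.fderiv_fderiv_apply_nonpos hf _

theorem lap_sub {f g : Euc N → ℝ} (hf : ContDiff ℝ 2 f) (hg : ContDiff ℝ 2 g) (x : Euc N) :
    lap (f - g) x = lap f x - lap g x := by
  have hfd := hf.differentiable (by norm_num)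
  have hgd := hg.differentiable (by norm_num)
  have hdir : ∀ w, (fun y => fderiv ℝ (f - g) y w)
      = (fun y => fderiv ℝ f y w) - (fun y => fderiv ℝ g y w) := fun w => by
    ext y; simp [fderiv_sub (hfd y) (hgd y)]
  simp only [lap, hdir, fderiv_sub ((hf.differentiable_fderiv_apply _) x)
    ((hg.differentiable_fderiv_apply _) x), sub_apply, Finset.sum_sub_distrib]

theorem lap_const_mul (a : ℝ) (f : Euc N → ℝ) (x : Euc N) :
    lap (fun y => a * f y) x = a * lap f x := by
  have hmul : ∀ (g : Euc N → ℝ) y, fderiv ℝ (fun z => a * g z) y = a • fderiv ℝ g y :=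
    fun g y => congrFun (fderiv_const_smul_field (f := g) a) y
  simp only [lap, hmul, smul_apply, smul_eq_mul, Finset.mul_sum]

theorem lap_const_sub (a : ℝ) (f : Euc N → ℝ) (x : Euc N) :
    lap (fun y => a - f y) x = -lap f x := by
  have hdir : ∀ w, (fun y => fderiv ℝ (fun y => a - f y) y w)
      = -(fun y => fderiv ℝ f y w) := fun w => by
    ext y; simp [fderiv_const_sub]
  simp [lap, hdir, fderiv_neg]

theorem lap_const_add (a : ℝ) (f : Euc N → ℝ) (x : Euc N) :
    lap (fun y => a + f y) x = lap f x := by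
  simp [lap, fderiv_const_add]

theorem lap_norm_sq (x : Euc N) : lap (fun y => ‖y‖ ^ 2) x = 2 * N := by
  have hdir : ∀ w : Euc N, (fun y : Euc N => (2 • innerSL ℝ y) w) = ⇑((2:ℝ) • innerSL ℝ w) :=
    fun w => by ext y; simp [real_inner_comm, two_mul]
  simp only [lap, fderiv_norm_sq_apply, hdir, ContinuousLinearMap.fderiv]
  simp [mul_comm]

theorem lap_comp_inner {g : ℝ → ℝ} (hg : ContDiff ℝ 2 g) (e x : Euc N) :
    lap (fun y => g (inner ℝ y e)) x = ‖e‖ ^ 2 * deriv (deriv g) (inner ℝ x e) := by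
  set ℓ : Euc N →L[ℝ] ℝ := innerSL ℝ e
  have hℓ : ∀ y, inner ℝ y e = ℓ y := fun y => by simp [ℓ, real_inner_comm]
  have hcomp : ∀ {G : ℝ → ℝ}, Differentiable ℝ G → ∀ y,
      HasFDerivAt (fun y => G (ℓ y)) (deriv G (ℓ y) • ℓ) y := fun hG y =>
    (hG (ℓ y)).hasDerivAt.comp_hasFDerivAt y ℓ.hasFDerivAt
  have hgd : Differentiable ℝ g := hg.differentiable (by norm_num)
  have hg'd : Differentiable ℝ (deriv g) := hg.differentiable_deriv_two
  have hdir : ∀ w, (fun y => fderiv ℝ (fun y => g (ℓ y)) y w) = fun y => deriv g (ℓ y) * ℓ w :=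
    fun w => by ext y; simp [(hcomp hgd y).fderiv]
  simp only [lap, hℓ, hdir, ((hcomp hg'd x).mul_const _).fderiv]
  have hcoord : ∀ i, ℓ (EuclideanSpace.single i 1) = e i := fun i => by
    simp [ℓ, EuclideanSpace.inner_single_right]
  simp only [smul_apply, smul_eq_mul, hcoord, EuclideanSpace.norm_sq_eq, Real.norm_eq_abs, sq_abs,
    Finset.sum_mul]
  exact Finset.sum_congr rfl fun i _ => by ring

end Laplacian

section ExpWave

variable {N : ℕ}

def expWave (μ c R : ℝ) (e : Euc N) (t : ℝ) (x : Euc N) : ℝ :=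
  Real.exp (-μ * (inner ℝ x e - c * t - R))

variable {μ c R : ℝ} {e : Euc N}

theorem expWave_pos (t : ℝ) (x : Euc N) : 0 < expWave μ c R e t x := Real.exp_pos _

theorem one_le_expWave {t : ℝ} {x : Euc N} (hμ : 0 ≤ μ) (hx : inner ℝ x e - c * t ≤ R) :
    1 ≤ expWave μ c R e t x :=
  Real.one_le_exp_iff.mpr (mul_nonneg_of_nonpos_of_nonpos (by linarith) (by linarith))

theorem one_le_expWave_zero {x : Euc N} (hμ : 0 ≤ μ) (he : ‖e‖ = 1) (hx : ‖x‖ ≤ R) :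
    1 ≤ expWave μ c R e 0 x :=
  one_le_expWave hμ (by simpa [he] using (real_inner_le_norm x e).trans (by simpa [he] using hx))

theorem expWave_le_of_le {t s : ℝ} {x : Euc N} (hμ : 0 ≤ μ) (hs : s ≤ inner ℝ x e - c * t) :
    expWave μ c R e t x ≤ Real.exp (-μ * (s - R)) :=
  Real.exp_le_exp.mpr (by nlinarith)

theorem le_expWave_of_le_one {ν : ℝ} {t y : ℝ} {x : Euc N} (hμ : 0 ≤ μ) (hμν : μ ≤ ν)
    (hy₁ : y ≤ 1) (hy : y ≤ expWave ν c R e t x) : y ≤ expWave μ c R e t x := by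
  rcases le_total (inner ℝ x e - c * t) R with hx | hx
  · exact hy₁.trans (one_le_expWave hμ hx)
  · exact hy.trans (Real.exp_le_exp.mpr (by nlinarith))

theorem continuous_expWave : Continuous fun p : ℝ × Euc N => expWave μ c R e p.1 p.2 := by
  unfold expWave; fun_prop

theorem hasDerivAt_expWave (t : ℝ) (x : Euc N) :
    HasDerivAt (fun τ => expWave μ c R e τ x) (μ * c * expWave μ c R e t x) t := by
  have : HasDerivAt (fun τ => -μ * (inner ℝ x e - c * τ - R)) (μ * c) t := by
    simpa using (((hasDerivAt_id t).const_mul c).const_sub (inner ℝ x e)).sub_const R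
      |>.const_mul (-μ)
  simpa [expWave, mul_comm] using this.exp

theorem contDiff_expWave (t : ℝ) : ContDiff ℝ 2 (expWave μ c R e t) :=
  Real.contDiff_exp.comp <| contDiff_const.mul <|
    ((contDiff_id.inner ℝ contDiff_const).sub contDiff_const).sub contDiff_const

theorem lap_expWave (t : ℝ) (x : Euc N) :
    lap (expWave μ c R e t) x = μ ^ 2 * ‖e‖ ^ 2 * expWave μ c R e t x := by
  set g : ℝ → ℝ := fun s => Real.exp (-μ * (s - c * t - R))
  have hg : ∀ s, HasDerivAt g (-μ * g s) s := fun s => by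
    simpa [g, mul_comm] using (((hasDerivAt_id s).sub_const (c * t)).sub_const R
      |>.const_mul (-μ)).exp
  have hg' : deriv g = fun s => -μ * g s := funext fun s => (hg s).deriv
  have hg'' : ∀ s, deriv (deriv g) s = μ ^ 2 * g s := fun s => by
    rw [hg', ((hg s).const_mul (-μ)).deriv]; ring
  have hgc : ContDiff ℝ 2 g := by fun_prop
  change lap (fun y => g (inner ℝ y e)) x = _
  rw [lap_comp_inner hgc, hg'']
  simp only [expWave, g]
  ring

end ExpWave

section Comparison

variable {N : ℕ}

structure IsSubsolution (d r : ℝ) (w : ℝ → Euc N → ℝ) : Prop where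
  continuousOn : ContinuousOn (fun p : ℝ × Euc N => w p.1 p.2) (Ici 0 ×ˢ univ)
  differentiableAt : ∀ x : Euc N, ∀ t : ℝ, 0 < t → DifferentiableAt ℝ (fun τ => w τ x) t
  contDiff : ∀ t : ℝ, 0 < t → ContDiff ℝ 2 (w t)
  bddAbove : ∃ M : ℝ, ∀ t : ℝ, 0 ≤ t → ∀ x : Euc N, w t x ≤ M
  deriv_le : ∀ t : ℝ, 0 < t → ∀ x : Euc N,
    deriv (fun τ => w τ x) t ≤ d * lap (w t) x + r * w t x

variable {d r : ℝ} {w : ℝ → Euc N → ℝ}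

/-- A strict supersolution of `∂ₜb = dΔb` that dominates any function bounded above at spatial
infinity. -/
def heatBarrier (d δ : ℝ) (t : ℝ) (x : Euc N) : ℝ :=
  δ * Real.exp ((2 * d * N + 1) * t) * (1 + ‖x‖ ^ 2)

theorem contDiff_heatBarrier (δ t : ℝ) : ContDiff ℝ 2 (heatBarrier (N := N) d δ t) :=
  contDiff_const.mul (contDiff_const.add (contDiff_norm_sq ℝ))

theorem lap_heatBarrier (δ t : ℝ) (x : Euc N) :
    lap (heatBarrier d δ t) x = δ * Real.exp ((2 * d * N + 1) * t) * (2 * N) := by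
  change lap (fun y => δ * Real.exp ((2 * d * N + 1) * t) * (1 + ‖y‖ ^ 2)) x = _
  rw [lap_const_mul, lap_const_add, lap_norm_sq]

theorem IsSubsolution.not_isMaxOn_sub_heatBarrier (hd : 0 ≤ d) (hw : IsSubsolution d 0 w)
    {δ t₀ : ℝ} (hδ : 0 < δ) (ht₀ : 0 < t₀) {x₀ : Euc N}
    (htime : IsMaxOn (fun τ => w τ x₀ - heatBarrier d δ τ x₀) (Icc 0 t₀) t₀)
    (hspace : IsMaxOn (fun y => w t₀ y - heatBarrier d δ t₀ y) univ x₀) : False := by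
  set K : ℝ := 2 * d * N + 1
  set E := Real.exp (K * t₀)
  set P := 1 + ‖x₀‖ ^ 2
  have hderiv : HasDerivAt (fun τ => w τ x₀ - heatBarrier d δ τ x₀)
      (deriv (fun τ => w τ x₀) t₀ - δ * (E * K) * P) t₀ :=
    (hw.differentiableAt x₀ t₀ ht₀).hasDerivAt.sub
      ((((hasDerivAt_id t₀).const_mul K).exp.const_mul δ).mul_const P |>.congr_deriv (by simp [E]))
  have hderiv_nonneg : 0 ≤ deriv (fun τ => w τ x₀) t₀ - δ * (E * K) * P := by
    rw [← hderiv.deriv]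
    exact htime.deriv_nonneg_of_right ht₀ hderiv.differentiableAt
  have hlap := IsLocalMax.lap_nonpos ((hw.contDiff t₀ ht₀).sub (contDiff_heatBarrier δ t₀))
    (hspace.isLocalMax univ_mem)
  change lap (w t₀ - heatBarrier d δ t₀) x₀ ≤ 0 at hlap
  rw [lap_sub (hw.contDiff t₀ ht₀) (contDiff_heatBarrier δ t₀), lap_heatBarrier] at hlap
  have hP : 1 ≤ P := le_add_of_nonneg_right (sq_nonneg _)
  have hδE : 0 < δ * E := mul_pos hδ (Real.exp_pos _)
  nlinarith [hw.deriv_le t₀ ht₀ x₀, mul_le_mul_of_nonneg_left (sub_nonpos.1 hlap) hd,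
    mul_le_mul_of_nonneg_left hP (by positivity : (0:ℝ) ≤ δ * E * K)]

theorem IsSubsolution.le_heatBarrier (hd : 0 ≤ d) (hw : IsSubsolution d 0 w)
    (h0 : ∀ x, w 0 x ≤ 0) {δ T : ℝ} (hδ : 0 < δ) :
    ∀ t ∈ Icc 0 T, ∀ x, w t x ≤ heatBarrier d δ t x := by
  set z : ℝ × Euc N → ℝ := fun p => w p.1 p.2 - heatBarrier d δ p.1 p.2
  by_contra! hcon
  obtain ⟨t₁, ht₁, x₁, hx₁⟩ := hcon
  have hz₁ : 0 < z (t₁, x₁) := sub_pos.2 hx₁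
  obtain ⟨M, hM⟩ := hw.bddAbove
  have hzM : ∀ p ∈ Icc (0 : ℝ) T ×ˢ (univ : Set (Euc N)), z p ≤ M - δ * ‖p.2‖ ^ 2 := by
    intro p hp
    have h1 : 1 ≤ Real.exp ((2 * d * N + 1) * p.1) :=
      Real.one_le_exp_iff.2 (mul_nonneg (by positivity) hp.1.1)
    have := hM p.1 hp.1.1 p.2
    simp only [z, heatBarrier]
    nlinarith [mul_nonneg (mul_nonneg hδ.le (sub_nonneg.2 h1))
      (by positivity : (0:ℝ) ≤ 1 + ‖p.2‖ ^ 2)]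
  have hcont : ContinuousOn z (Icc 0 T ×ˢ univ) :=
    (hw.continuousOn.mono (prod_mono Icc_subset_Ici_self subset_rfl)).sub
      (by unfold heatBarrier; fun_prop : Continuous fun p : ℝ × Euc N =>
        heatBarrier d δ p.1 p.2).continuousOn
  obtain ⟨⟨t₀, x₀⟩, hp₀, hmax⟩ := exists_isMaxOn_Icc_prod (ρ := |M| / δ + 1) (p₁ := (t₁, x₁))
    hcont ⟨ht₁, mem_univ _⟩ fun p hp hρ => by
      have : |M| < ‖p.2‖ * δ := (div_lt_iff₀ hδ).1 (by linarith)
      have h1 : ‖p.2‖ * δ ≤ ‖p.2‖ ^ 2 * δ := by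
        have : 1 ≤ ‖p.2‖ := by linarith [div_nonneg (abs_nonneg M) hδ.le]
        exact mul_le_mul_of_nonneg_right (by nlinarith) hδ.le
      linarith [le_abs_self M, hzM p hp]
  have hz₀ : 0 < z (t₀, x₀) := hz₁.trans_le (hmax ⟨ht₁, mem_univ _⟩)
  have ht₀ : 0 < t₀ := by
    refine lt_of_le_of_ne hp₀.1.1 fun h => ?_
    subst h
    have := h0 x₀
    simp only [z, heatBarrier, mul_zero, Real.exp_zero, mul_one] at hz₀
    nlinarith [sq_nonneg ‖x₀‖]
  exact hw.not_isMaxOn_sub_heatBarrier hd hδ ht₀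
    (fun τ hτ => isMaxOn_iff.1 hmax (τ, x₀) ⟨⟨hτ.1, hτ.2.trans hp₀.1.2⟩, mem_univ _⟩)
    (fun y _ => isMaxOn_iff.1 hmax (t₀, y) ⟨hp₀.1, mem_univ y⟩)

theorem IsSubsolution.nonpos_of_rate_zero (hd : 0 ≤ d) (hw : IsSubsolution d 0 w)
    (h0 : ∀ x, w 0 x ≤ 0) (t : ℝ) (ht : 0 ≤ t) (x : Euc N) : w t x ≤ 0 := by
  set C := Real.exp ((2 * d * N + 1) * t) * (1 + ‖x‖ ^ 2)
  have hC : 0 < C := by positivity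
  by_contra! hpos
  have := hw.le_heatBarrier hd h0 (δ := w t x / (2 * C)) (T := t) (by positivity) t ⟨ht, le_rfl⟩ x
  rw [heatBarrier, mul_assoc, div_mul_eq_mul_div, mul_div_mul_right _ _ hC.ne'] at this
  linarith

theorem IsSubsolution.exp_neg_mul (hr : 0 ≤ r) (hw : IsSubsolution d r w) :
    IsSubsolution d 0 fun t x => Real.exp (-(r * t)) * w t x where
  continuousOn :=
    (by fun_prop : Continuous fun p : ℝ × Euc N => Real.exp (-(r * p.1))).continuousOn.mul
      hw.continuousOn
  differentiableAt x t ht := by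
    have := hw.differentiableAt x t ht
    fun_prop
  contDiff t ht := contDiff_const.mul (hw.contDiff t ht)
  bddAbove := by
    obtain ⟨M, hM⟩ := hw.bddAbove
    refine ⟨max M 0, fun t ht x => ?_⟩
    have h1 : Real.exp (-(r * t)) ≤ 1 := Real.exp_le_one_iff.2 (by nlinarith)
    have := hM t ht x
    nlinarith [Real.exp_pos (-(r * t)), le_max_left M 0, le_max_right M 0]
  deriv_le t ht x := by
    have hE : HasDerivAt (fun τ => Real.exp (-(r * τ))) (-r * Real.exp (-(r * t))) t := by
      simpa [mul_comm] using ((hasDerivAt_id t).const_mul r).neg.exp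
    rw [(hE.fun_mul (hw.differentiableAt x t ht).hasDerivAt).deriv, lap_const_mul]
    nlinarith [hw.deriv_le t ht x, Real.exp_pos (-(r * t))]

theorem IsSubsolution.nonpos (hd : 0 ≤ d) (hr : 0 ≤ r) (hw : IsSubsolution d r w)
    (h0 : ∀ x, w 0 x ≤ 0) (t : ℝ) (ht : 0 ≤ t) (x : Euc N) : w t x ≤ 0 := by
  have := (hw.exp_neg_mul hr).nonpos_of_rate_zero hd (fun x => by simpa using h0 x) t ht x
  exact nonpos_of_mul_nonpos_right this (Real.exp_pos _)

end Comparison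

section LotkaVolterra

variable {N : ℕ} {d₁ d₂ r₁ r₂ a₁ a₂ : ℝ} {u v : ℝ → Euc N → ℝ}

theorem AdmissibleInit.exists_radius {u₀ v₀ : Euc N → ℝ} (h : AdmissibleInit u₀ v₀) :
    ∃ R : ℝ, ∀ x, R < ‖x‖ → u₀ x = 0 ∧ v₀ x = 1 := by
  obtain ⟨-, -, -, -, K, hK, hout⟩ := h
  obtain ⟨R, hR⟩ := hK.isBounded.subset_closedBall 0
  exact ⟨R, fun x hx => hout x fun hxK => (mem_closedBall_zero_iff.1 (hR hxK)).not_gt hx⟩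

theorem IsLVSolution.differentiableAt_u (hsol : IsLVSolution d₁ d₂ r₁ r₂ a₁ a₂ u v) (x : Euc N)
    {t : ℝ} (ht : 0 < t) : DifferentiableAt ℝ (fun τ => u τ x) t :=
  ((hsol.smooth_t x).1.differentiableOn (by norm_num)).differentiableAt (Ioi_mem_nhds ht)

theorem IsLVSolution.differentiableAt_v (hsol : IsLVSolution d₁ d₂ r₁ r₂ a₁ a₂ u v) (x : Euc N)
    {t : ℝ} (ht : 0 < t) : DifferentiableAt ℝ (fun τ => v τ x) t :=
  ((hsol.smooth_t x).2.differentiableOn (by norm_num)).differentiableAt (Ioi_mem_nhds ht)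

variable {c R : ℝ} {e : Euc N}

theorem IsLVSolution.isSubsolution_u_sub_expWave (hsol : IsLVSolution d₁ d₂ r₁ r₂ a₁ a₂ u v)
    (hrange : ∀ t : ℝ, 0 ≤ t → ∀ x : Euc N, u t x ∈ Icc (0:ℝ) 1 ∧ v t x ∈ Icc (0:ℝ) 1)
    (hr₁ : 0 ≤ r₁) (ha₁ : 0 ≤ a₁) {α : ℝ}
    (he : ‖e‖ = 1) (hαc : d₁ * α ^ 2 + r₁ ≤ α * c) :
    IsSubsolution d₁ r₁ fun t x => u t x - expWave α c R e t x where
  continuousOn := hsol.contu.sub continuous_expWave.continuousOn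
  differentiableAt x t ht :=
    (hsol.differentiableAt_u x ht).sub (hasDerivAt_expWave t x).differentiableAt
  contDiff t ht := (hsol.smooth_x t ht).1.sub (contDiff_expWave t)
  bddAbove := ⟨1, fun t ht x => by
    have : 0 < expWave α c R e t x := expWave_pos t x
    linarith [(hrange t ht x).1.2]⟩
  deriv_le t ht x := by
    rw [((hsol.differentiableAt_u x ht).hasDerivAt.fun_sub (hasDerivAt_expWave t x)).deriv]
    change _ ≤ d₁ * lap (u t - expWave α c R e t) x + _
    rw [lap_sub (hsol.smooth_x t ht).1 (contDiff_expWave t), lap_expWave, he, hsol.eqn_u t ht x]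
    obtain ⟨⟨hu₀, -⟩, hv₀, -⟩ := hrange t ht.le x
    have hψ : 0 < expWave α c R e t x := expWave_pos t x
    nlinarith [mul_nonneg (mul_nonneg hr₁ hu₀) (add_nonneg hu₀ (mul_nonneg ha₁ hv₀)),
      mul_le_mul_of_nonneg_right hαc hψ.le]

theorem IsLVSolution.u_le_expWave (hsol : IsLVSolution d₁ d₂ r₁ r₂ a₁ a₂ u v)
    (hrange : ∀ t : ℝ, 0 ≤ t → ∀ x : Euc N, u t x ∈ Icc (0:ℝ) 1 ∧ v t x ∈ Icc (0:ℝ) 1)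
    (hd₁ : 0 ≤ d₁) (hr₁ : 0 ≤ r₁) (ha₁ : 0 ≤ a₁) {α : ℝ}
    (hα : 0 ≤ α) (he : ‖e‖ = 1) (hαc : d₁ * α ^ 2 + r₁ ≤ α * c)
    (hR : ∀ x, R < ‖x‖ → u 0 x = 0) (t : ℝ) (ht : 0 ≤ t) (x : Euc N) :
    u t x ≤ expWave α c R e t x := by
  refine sub_nonpos.1 <| (hsol.isSubsolution_u_sub_expWave hrange hr₁ ha₁ he hαc).nonpos hd₁ hr₁
    (fun y => sub_nonpos.2 ?_) t ht x
  rcases lt_or_ge R ‖y‖ with hy | hy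
  · exact (hR y hy).symm ▸ (expWave_pos 0 y).le
  · exact (hrange 0 le_rfl y).1.2.trans (one_le_expWave_zero hα he hy)

theorem IsLVSolution.isSubsolution_one_sub_v_sub_expWave (hsol : IsLVSolution d₁ d₂ r₁ r₂ a₁ a₂ u v)
    (hrange : ∀ t : ℝ, 0 ≤ t → ∀ x : Euc N, u t x ∈ Icc (0:ℝ) 1 ∧ v t x ∈ Icc (0:ℝ) 1)
    (hr₂ : 0 ≤ r₂) (ha₂ : 0 ≤ a₂)
    {β B : ℝ} (hB : 0 ≤ B) (he : ‖e‖ = 1)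
    (hu : ∀ t : ℝ, 0 ≤ t → ∀ x : Euc N, u t x ≤ expWave β c R e t x)
    (hβB : r₂ * a₂ ≤ (β * c - d₂ * β ^ 2) * B) :
    IsSubsolution d₂ 0 fun t x => 1 - v t x - B * expWave β c R e t x where
  continuousOn := (continuousOn_const.sub hsol.contv).sub
    (continuous_const.mul continuous_expWave).continuousOn
  differentiableAt x t ht :=
    ((hsol.differentiableAt_v x ht).const_sub 1).sub
      ((hasDerivAt_expWave t x).const_mul B).differentiableAt
  contDiff t ht := (contDiff_const.sub (hsol.smooth_x t ht).2).sub
    (contDiff_const.mul (contDiff_expWave t))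
  bddAbove := ⟨1, fun t ht x => by
    have : 0 < expWave β c R e t x := expWave_pos t x
    nlinarith [(hrange t ht x).2.1]⟩
  deriv_le t ht x := by
    rw [(((hsol.differentiableAt_v x ht).hasDerivAt.const_sub 1).fun_sub
      ((hasDerivAt_expWave t x).const_mul B)).deriv]
    change _ ≤ d₂ * lap ((fun y => 1 - v t y) - fun y => B * expWave β c R e t y) x + _
    rw [lap_sub (contDiff_const.sub (hsol.smooth_x t ht).2)
        (contDiff_const.mul (contDiff_expWave t)), lap_const_sub, lap_const_mul, lap_expWave, he,
      hsol.eqn_v t ht x]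
    obtain ⟨⟨hu₀, -⟩, hv₀, hv₁⟩ := hrange t ht.le x
    have hψ : 0 < expWave β c R e t x := expWave_pos t x
    nlinarith [mul_nonneg (mul_nonneg hr₂ hv₀) (sub_nonneg.2 hv₁),
      mul_nonneg (mul_nonneg (mul_nonneg hr₂ ha₂) hu₀) (sub_nonneg.2 hv₁),
      mul_le_mul_of_nonneg_left (hu t ht.le x) (mul_nonneg hr₂ ha₂),
      mul_le_mul_of_nonneg_right hβB hψ.le]

theorem IsLVSolution.one_sub_v_le_expWave (hsol : IsLVSolution d₁ d₂ r₁ r₂ a₁ a₂ u v)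
    (hrange : ∀ t : ℝ, 0 ≤ t → ∀ x : Euc N, u t x ∈ Icc (0:ℝ) 1 ∧ v t x ∈ Icc (0:ℝ) 1)
    (hd₂ : 0 ≤ d₂) (hr₂ : 0 ≤ r₂) (ha₂ : 0 ≤ a₂)
    {β B : ℝ} (hβ : 0 ≤ β) (hB : 1 ≤ B) (he : ‖e‖ = 1)
    (hu : ∀ t : ℝ, 0 ≤ t → ∀ x : Euc N, u t x ≤ expWave β c R e t x)
    (hβB : r₂ * a₂ ≤ (β * c - d₂ * β ^ 2) * B)
    (hR : ∀ x, R < ‖x‖ → v 0 x = 1) (t : ℝ) (ht : 0 ≤ t) (x : Euc N) :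
    1 - v t x ≤ B * expWave β c R e t x := by
  refine sub_nonpos.1 <| (hsol.isSubsolution_one_sub_v_sub_expWave hrange hr₂ ha₂
    (zero_le_one.trans hB) he hu hβB).nonpos hd₂ le_rfl (fun y => sub_nonpos.2 ?_) t ht x
  rcases lt_or_ge R ‖y‖ with hy | hy
  · rw [hR y hy, sub_self]
    exact mul_nonneg (zero_le_one.trans hB) (expWave_pos 0 y).le
  · have := one_le_expWave_zero (c := c) hβ he hy
    nlinarith [(hrange 0 le_rfl y).2.1]

end LotkaVolterra

theorem exists_expWave_speed {d r c : ℝ} (hd : 0 < d) (hr : 0 < r)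
    (hc : 2 * Real.sqrt r * Real.sqrt d < c) :
    ∃ c₁ α : ℝ, 0 < c₁ ∧ c₁ < c ∧ 0 < α ∧ d * α ^ 2 + r ≤ α * c₁ := by
  have hsd := Real.sqrt_pos.2 hd
  have hsr := Real.sqrt_pos.2 hr
  refine ⟨2 * Real.sqrt r * Real.sqrt d, Real.sqrt r / Real.sqrt d, by positivity, hc,
    by positivity, le_of_eq ?_⟩
  field_simp
  rw [Real.sq_sqrt hd.le, Real.sq_sqrt hr.le]
  ring

theorem exists_rate_amplitude {d c α A : ℝ} (hd : 0 < d) (hc : 0 < c) (hα : 0 < α) :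
    ∃ β B : ℝ, 0 < β ∧ β ≤ α ∧ 1 ≤ B ∧ A ≤ (β * c - d * β ^ 2) * B := by
  set β := min α (c / (2 * d))
  have hβ : 0 < β := lt_min hα (by positivity)
  have hdβ : d * β ≤ c / 2 :=
    calc d * β ≤ d * (c / (2 * d)) := mul_le_mul_of_nonneg_left (min_le_right _ _) hd.le
      _ = c / 2 := by field_simp
  have hκ : 0 < β * c - d * β ^ 2 := by nlinarith
  refine ⟨β, max 1 (A / (β * c - d * β ^ 2)), hβ, min_le_left _ _, le_max_left _ _, ?_⟩
  rw [← div_le_iff₀' hκ]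
  exact le_max_right _ _

theorem exists_expWave_add_le {N : ℕ} {α β B c₁ c R ε : ℝ} (hα : 0 < α) (hβ : 0 < β)
    (hB : 0 ≤ B) (hc : c₁ < c) (hε : 0 < ε) :
    ∃ T > 0, ∀ t, T ≤ t → ∀ e x : Euc N, c * t ≤ inner ℝ x e →
      expWave α c₁ R e t x + B * expWave β c₁ R e t x ≤ ε := by
  have hlin : Tendsto (fun t => (c - c₁) * t - R) atTop atTop :=
    tendsto_atTop_add_const_right _ _ (tendsto_id.const_mul_atTop (sub_pos.2 hc))
  have hdecay : ∀ {μ}, 0 < μ →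
      Tendsto (fun t => Real.exp (-μ * ((c - c₁) * t - R))) atTop (𝓝 0) := fun hμ => by
    refine (Real.tendsto_exp_neg_atTop_nhds_zero.comp (hlin.const_mul_atTop hμ)).congr fun t => ?_
    simp [neg_mul]
  have hsum := (hdecay hα).add ((hdecay hβ).const_mul B)
  rw [mul_zero, add_zero] at hsum
  obtain ⟨T, hT⟩ := eventually_atTop.1
    ((hsum.eventually (eventually_le_nhds hε)).and (eventually_gt_atTop 0))
  refine ⟨max T 1, by positivity, fun t ht e x hx => ?_⟩
  have hs : (c - c₁) * t ≤ inner ℝ x e - c₁ * t := by linarith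
  calc expWave α c₁ R e t x + B * expWave β c₁ R e t x
      ≤ Real.exp (-α * ((c - c₁) * t - R)) + B * Real.exp (-β * ((c - c₁) * t - R)) :=
        add_le_add (expWave_le_of_le hα.le hs)
          (mul_le_mul_of_nonneg_left (expWave_le_of_le hβ.le hs) hB)
    _ ≤ ε := (hT t (le_of_max_le_left ht)).1

theorem spreading_upper_bound_halfspace_general {N : ℕ} (d₁ d₂ r₁ r₂ a₁ a₂ : ℝ)
    (hp : LVParams d₁ d₂ r₁ r₂ a₁ a₂) (u v : ℝ → Euc N → ℝ)
    (hsol : IsLVSolution d₁ d₂ r₁ r₂ a₁ a₂ u v)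
    (hrange : ∀ t : ℝ, 0 ≤ t → ∀ x : Euc N, u t x ∈ Icc (0:ℝ) 1 ∧ v t x ∈ Icc (0:ℝ) 1)
    (u₀ v₀ : Euc N → ℝ) (hinit : AdmissibleInit u₀ v₀)
    (hu0 : ∀ x, u 0 x = u₀ x) (hv0 : ∀ x, v 0 x = v₀ x) :
    ∀ e : Euc N, ‖e‖ = 1 →
    ∀ c : ℝ, 2 * Real.sqrt r₁ * max (Real.sqrt d₁) (Real.sqrt (d₂ / 2)) < c →
      (∀ ε > (0:ℝ), ∃ T : ℝ, ∀ t : ℝ, T ≤ t → ∀ x : Euc N, c * t ≤ (inner ℝ x e : ℝ) →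
        u t x + |1 - v t x| ≤ ε) ∧
      (∀ ε > (0:ℝ), ∃ T : ℝ, ∀ t : ℝ, T ≤ t → ∀ x : Euc N, c * t ≤ ‖x‖ →
        u t x + |1 - v t x| ≤ ε) := by
  obtain ⟨hd₁, hd₂, hr₁, hr₂, ha₁, -, ha₂⟩ := hp
  intro e he c hc
  obtain ⟨R, hR⟩ := hinit.exists_radius
  obtain ⟨c₁, α, hc₁, hc₁c, hα, hαc₁⟩ := exists_expWave_speed hd₁ hr₁
    ((mul_le_mul_of_nonneg_left (le_max_left _ _) (by positivity)).trans_lt hc)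
  obtain ⟨β, B, hβ, hβα, hB, hβB⟩ := exists_rate_amplitude (A := r₂ * a₂) hd₂ hc₁ hα
  have hfront : ∀ e : Euc N, ‖e‖ = 1 → ∀ t, 0 ≤ t → ∀ x,
      u t x + |1 - v t x| ≤ expWave α c₁ R e t x + B * expWave β c₁ R e t x := by
    intro e he t ht x
    have hu := hsol.u_le_expWave hrange hd₁.le hr₁.le ha₁.le hα.le he hαc₁
      fun x hx => (hu0 x).trans (hR x hx).1
    have hv := hsol.one_sub_v_le_expWave hrange hd₂.le hr₂.le (by linarith) hβ.le hB he
      (fun t ht x => le_expWave_of_le_one hβ.le hβα (hrange t ht x).1.2 (hu t ht x)) hβB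
      (fun x hx => (hv0 x).trans (hR x hx).2) t ht x
    rw [abs_of_nonneg (sub_nonneg.2 (hrange t ht x).2.2)]
    linarith [hu t ht x]
  refine ⟨fun ε hε => ?_, fun ε hε => ?_⟩ <;>
    obtain ⟨T, hT, hTε⟩ :=
      exists_expWave_add_le (N := N) (B := B) (R := R) hα hβ (by linarith) hc₁c hε
  · exact ⟨T, fun t ht x hx => (hfront e he t (hT.le.trans ht) x).trans (hTε t ht e x hx)⟩
  · refine ⟨T, fun t ht x hx => ?_⟩
    have hx₀ : x ≠ 0 := by
      rintro rfl
      nlinarith [norm_zero (E := Euc N)]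
    refine (hfront (‖x‖⁻¹ • x) (norm_smul_inv_norm (𝕜 := ℝ) hx₀) t (hT.le.trans ht) x).trans
      (hTε t ht _ x ?_)
    rwa [real_inner_smul_right, real_inner_self_eq_norm_sq, pow_two, inv_mul_cancel_left₀
      (norm_ne_zero_iff.2 hx₀)]

/-- for every unit `e` and `c > 2√r₁·max(√d₁, √(d₂/2))`,
`sup_{x·e ≥ ct} (u(t,x) + |1 − v(t,x)|) → 0`, and the same holds over `{|x| ≥ ct}`. -/
theorem spreading_upper_bound_halfspace {N : ℕ} (hN : 2 ≤ N) (d₁ d₂ r₁ r₂ a₁ a₂ : ℝ)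
    (hp : LVParams d₁ d₂ r₁ r₂ a₁ a₂) (u v : ℝ → Euc N → ℝ)
    (hsol : IsLVSolution d₁ d₂ r₁ r₂ a₁ a₂ u v)
    (hrange : ∀ t : ℝ, 0 ≤ t → ∀ x : Euc N, u t x ∈ Icc (0:ℝ) 1 ∧ v t x ∈ Icc (0:ℝ) 1)
    (u₀ v₀ : Euc N → ℝ) (hinit : AdmissibleInit u₀ v₀)
    (hu0 : ∀ x, u 0 x = u₀ x) (hv0 : ∀ x, v 0 x = v₀ x) :
    ∀ e : Euc N, ‖e‖ = 1 →
    ∀ c : ℝ, 2 * Real.sqrt r₁ * max (Real.sqrt d₁) (Real.sqrt (d₂ / 2)) < c →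
      (∀ ε > (0:ℝ), ∃ T : ℝ, ∀ t : ℝ, T ≤ t → ∀ x : Euc N, c * t ≤ (inner ℝ x e : ℝ) →
        u t x + |1 - v t x| ≤ ε) ∧
      (∀ ε > (0:ℝ), ∃ T : ℝ, ∀ t : ℝ, T ≤ t → ∀ x : Euc N, c * t ≤ ‖x‖ →
        u t x + |1 - v t x| ≤ ε) :=
  spreading_upper_bound_halfspace_general d₁ d₂ r₁ r₂ a₁ a₂ hp u v hsol hrange u₀ v₀ hinit hu0 hv0

end
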